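/- Let r be a vertex of G = K(m, 2) for m ≥ 5 and t ≥ 1, and let y be a vertex at distance 2 from r. Then the configuration C_{t,2} with 4t − 1 pebbles on y, one pebble on every other vertex at distance 2 from r, and zero pebbles elsewhere (so |C_{t,2}| = 4t + 2(m−2) − 2) is not t-fold r-solvable. -/

import Mathlib

/-- A single pebbling step: remove two pebbles from `u` and add one to an adjacent `v`. -/
def PebblingStep {V : Type} [DecidableEq V] (G : SimpleGraph V) (C C' : V → ℕ) : Prop :=
  ∃ u v : V, G.Adj u v ∧ 2 ≤ C u ∧
    C' = fun w => if w = u then C u - 2 else if w = v then C v + 1 else C w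

/-- `C` solves the target distribution `D`: some sequence of pebbling steps reaches a
configuration with at least `D v` pebbles on each vertex `v`. -/
def Solvable {V : Type} [DecidableEq V] (G : SimpleGraph V) (C D : V → ℕ) : Prop :=
  ∃ C' : V → ℕ, Relation.ReflTransGen (PebblingStep G) C C' ∧ ∀ v, D v ≤ C' v

/-- The distribution with `t` pebbles stacked on `r` and none elsewhere. -/
def stack {V : Type} [DecidableEq V] (r : V) (t : ℕ) : V → ℕ :=
  fun v => if v = r then t else 0

/-- The pebbling number of the demand `D` in `G`: the smallest `m` such that every
configuration of size `m` is `D`-solvable. -/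
noncomputable def pebblingNumber {V : Type} [Fintype V] [DecidableEq V] (G : SimpleGraph V) (D : V → ℕ) : ℕ :=
  sInf {m | ∀ C : V → ℕ, (∑ v, C v) = m → Solvable G C D}

/-- The `t`-fold pebbling number of `G`. -/
noncomputable def tPebblingNumber {V : Type} [Fintype V] [DecidableEq V]
    (G : SimpleGraph V) (t : ℕ) : ℕ :=
  Finset.univ.sup fun r => pebblingNumber G (stack r t)

/-- Reaching `C'` from `C` by exactly `k` pebbling steps. -/
inductive StepsN {V : Type} [DecidableEq V] (G : SimpleGraph V) : ℕ → (V → ℕ) → (V → ℕ) → Prop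
  | refl (C : V → ℕ) : StepsN G 0 C C
  | tail {k : ℕ} {C C' C'' : V → ℕ} :
      StepsN G k C C' → PebblingStep G C' C'' → StepsN G (k + 1) C C''

/-- `C` has an `r`-solution of cost at most `c` (cost = number of pebbling steps plus one). -/
def CheaplySolvable {V : Type} [DecidableEq V] (G : SimpleGraph V) (C : V → ℕ) (r : V) (c : ℕ) : Prop :=
  ∃ (k : ℕ) (C' : V → ℕ), StepsN G k C C' ∧ 1 ≤ C' r ∧ k + 1 ≤ c

/-- The eccentricity of a vertex: the maximum distance to any other vertex. -/
noncomputable def eccentricity {V : Type} [Fintype V] (G : SimpleGraph V) (r : V) : ℕ :=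
  Finset.univ.sup fun v => G.dist r v

/-- A vertex is simplicial if its neighborhood induces a complete graph. -/
def IsSimplicial {V : Type} (G : SimpleGraph V) (v : V) : Prop :=
  ∀ a b : V, G.Adj v a → G.Adj v b → a ≠ b → G.Adj a b

/-- A 2-path is either `K₂` or `K₃`, or a graph with exactly two simplicial vertices
`u` and `v` such that the neighborhood of `v` induces `K₂` and `G - v` is a 2-path. -/
inductive IsTwoPath : {V : Type} → SimpleGraph V → Prop
  | complete2 {V : Type} (G : SimpleGraph V) :
      Nat.card V = 2 → (∀ a b : V, a ≠ b → G.Adj a b) → IsTwoPath G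
  | complete3 {V : Type} (G : SimpleGraph V) :
      Nat.card V = 3 → (∀ a b : V, a ≠ b → G.Adj a b) → IsTwoPath G
  | extend {V : Type} (G : SimpleGraph V) (u v : V) :
      u ≠ v →
      {w : V | IsSimplicial G w} = {u, v} →
      (G.neighborSet v).ncard = 2 →
      IsSimplicial G v →
      IsTwoPath (G.induce {w : V | w ≠ v}) →
      IsTwoPath G

/-- The Kneser graph `K(m, h)`: vertices are the `h`-element subsets of `{1, …, m}`,
adjacent iff disjoint. -/
def kneserGraph (m h : ℕ) : SimpleGraph {s : Finset (Fin m) // s.card = h} :=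
  SimpleGraph.fromRel fun a b => Disjoint a.1 b.1


/-!
Weigh a pebble `4` on `r`, `2` on a neighbour of `r`, `1` on `y`, and elsewhere count pebbles
only in pairs, each pair weighing `2`. No pebbling step increases the total weight. All vertices
other than `y` carry at most one pebble in `C_{t,2}` and none lies in the closed neighbourhood of
`r`, so its weight is that of `y`, namely `4t - 1`, whereas `t` pebbles on `r` already weigh `4t`.
-/

open Finset

namespace SimpleGraph

variable {V : Type} {G : SimpleGraph V} {u v : V}

lemma dist_eq_two_iff :
    G.dist u v = 2 ↔ u ≠ v ∧ ¬ G.Adj u v ∧ (G.commonNeighbors u v).Nonempty := by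
  rw [← edist_eq_two_iff]
  constructor
  · intro h
    rw [← (Reachable.of_dist_ne_zero (by omega)).coe_dist_eq_edist, h]
    rfl
  · intro h
    have hreach : G.Reachable u v := reachable_of_edist_ne_top (by simp [h])
    exact_mod_cast hreach.coe_dist_eq_edist.trans h

end SimpleGraph

section Potential

variable {V : Type} (G : SimpleGraph V)

def IsPebblingPotential (g : V → ℕ → ℕ) : Prop :=
  ∀ u v, G.Adj u v → ∀ a b, 2 ≤ a → g u (a - 2) + g v (b + 1) ≤ g u a + g v b

variable {G} [DecidableEq V] {g : V → ℕ → ℕ} {C C' : V → ℕ}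

lemma IsPebblingPotential.sum_le_of_pebblingStep [Fintype V] (hg : IsPebblingPotential G g)
    (h : PebblingStep G C C') : ∑ w, g w (C' w) ≤ ∑ w, g w (C w) := by
  obtain ⟨u, v, huv, hu, rfl⟩ := h
  have hne : u ≠ v := huv.ne
  rw [← sum_add_sum_compl {u, v}, ← sum_add_sum_compl {u, v} (fun w => g w (C w)),
    sum_pair hne, sum_pair hne]
  have hrest : ∑ w ∈ {u, v}ᶜ, g w (if w = u then C u - 2 else if w = v then C v + 1 else C w)
      = ∑ w ∈ {u, v}ᶜ, g w (C w) :=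
    sum_congr rfl fun w hw => by
      simp only [mem_compl, mem_insert, mem_singleton, not_or] at hw
      simp only [hw.1, hw.2, if_false]
  simp only [hrest, if_true, hne.symm, if_false]
  exact Nat.add_le_add_right (hg u v huv _ _ hu) _

lemma IsPebblingPotential.sum_le_of_reflTransGen [Fintype V] (hg : IsPebblingPotential G g)
    (h : Relation.ReflTransGen (PebblingStep G) C C') : ∑ w, g w (C' w) ≤ ∑ w, g w (C w) := by
  induction h with
  | refl => rfl
  | tail _ hstep ih => exact (hg.sum_le_of_pebblingStep hstep).trans ih

variable (G) [DecidableRel G.Adj]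

def rootWeight (r y w : V) (n : ℕ) : ℕ :=
  if w = r then 4 * n else if G.Adj r w then 2 * n else if w = y then n else 2 * (n / 2)

lemma isPebblingPotential_rootWeight (r y : V) : IsPebblingPotential G (rootWeight G r y) := by
  intro u v huv a b ha
  -- A step into `r` starts at a neighbour of `r` and trades weight 4 for 4; any other step gains
  -- at most 2 at `v` and loses at least 2 at `u`.
  by_cases hvr : v = r
  · subst hvr
    simp only [rootWeight, huv.ne, huv.symm, if_true, if_false]
    omega
  · have hgain : rootWeight G r y v (b + 1) ≤ rootWeight G r y v b + 2 := by
      simp only [rootWeight, hvr, if_false]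
      split_ifs <;> omega
    have hloss : rootWeight G r y u (a - 2) + 2 ≤ rootWeight G r y u a := by
      simp only [rootWeight]
      split_ifs <;> omega
    omega

end Potential

theorem not_solvable_stack_of_le_one {V : Type} [Fintype V] [DecidableEq V] {G : SimpleGraph V}
    {C : V → ℕ} {r y : V} {t : ℕ} (hyr : y ≠ r) (hadj : ¬ G.Adj r y) (hCr : C r = 0)
    (hCadj : ∀ w, G.Adj r w → C w = 0) (hCle : ∀ w ≠ y, C w ≤ 1) (hCy : C y < 4 * t) :
    ¬ Solvable G C (stack r t) := by
  classical
  rintro ⟨C', hsteps, hC'⟩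
  have hinit : ∑ w, rootWeight G r y w (C w) = C y := by
    rw [sum_eq_single_of_mem y (mem_univ y)]
    · simp [rootWeight, hyr, hadj]
    · intro w _ hwy
      by_cases hwr : w = r
      · simp [rootWeight, hwr, hCr]
      by_cases hw : G.Adj r w
      · simp [rootWeight, hw, hCadj w hw]
      · have := hCle w hwy
        simp only [rootWeight, hwr, hw, hwy, if_false]
        omega
  have hfinal : 4 * t ≤ ∑ w, rootWeight G r y w (C' w) := calc
    4 * t ≤ rootWeight G r y r (C' r) := by
      simpa [rootWeight, stack] using hC' r
    _ ≤ ∑ w, rootWeight G r y w (C' w) :=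
      single_le_sum (f := fun w => rootWeight G r y w (C' w)) (by simp) (mem_univ r)
  have hmono := (isPebblingPotential_rootWeight G r y).sum_le_of_reflTransGen hsteps
  omega

lemma sum_ite_eq_ite_boole {α : Type} [Fintype α] [DecidableEq α] {P : α → Prop} [DecidablePred P]
    {y : α} (hy : P y) (a : ℕ) :
    ∑ v, (if v = y then a else if P v then 1 else 0) = a + (#{v | P v} - 1) := by
  rw [Fintype.sum_eq_add_sum_compl y, if_pos rfl,
    sum_congr rfl fun v hv => if_neg (mem_compl.mp hv ∘ mem_singleton.mpr),
    sum_boole, Nat.cast_id, compl_singleton, filter_erase,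
    card_erase_of_mem (by simpa using hy)]

section Kneser

variable {m h : ℕ}

lemma kneserGraph_adj (hh : h ≠ 0) {a b : {s : Finset (Fin m) // s.card = h}} :
    (kneserGraph m h).Adj a b ↔ Disjoint a.1 b.1 := by
  refine ⟨fun ⟨_, hab⟩ => hab.elim id fun hba => hba.symm, fun hab => ⟨?_, Or.inl hab⟩⟩
  rintro rfl
  exact hh (by simpa [disjoint_self.mp hab] using a.2.symm)

lemma kneserGraph_commonNeighbors_nonempty (hh : h ≠ 0) {a b : {s : Finset (Fin m) // s.card = h}}
    (hab : #(a.1 ∪ b.1) + h ≤ m) : ((kneserGraph m h).commonNeighbors a b).Nonempty := by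
  obtain ⟨c, hc, hcard⟩ := exists_subset_card_eq (s := (a.1 ∪ b.1)ᶜ) (n := h)
    (by rw [card_compl, Fintype.card_fin]; omega)
  have hdisj : Disjoint (a.1 ∪ b.1) c := disjoint_of_subset_right hc disjoint_compl_right
  rw [disjoint_union_left] at hdisj
  exact ⟨⟨c, hcard⟩, (kneserGraph_adj hh).mpr hdisj.1, (kneserGraph_adj hh).mpr hdisj.2⟩

lemma kneserGraph_dist_eq_two_iff (hh : h ≠ 0) (hm : 3 * h ≤ m + 1)
    {a b : {s : Finset (Fin m) // s.card = h}} :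
    (kneserGraph m h).dist a b = 2 ↔ a ≠ b ∧ ¬ Disjoint a.1 b.1 := by
  rw [SimpleGraph.dist_eq_two_iff, kneserGraph_adj hh]
  refine ⟨fun hd => ⟨hd.1, hd.2.1⟩, fun ⟨hne, hab⟩ => ⟨hne, hab, ?_⟩⟩
  apply kneserGraph_commonNeighbors_nonempty hh
  have hinter : 0 < #(a.1 ∩ b.1) := card_pos.mpr (not_disjoint_iff_nonempty_inter.mp hab)
  have := card_union_add_card_inter a.1 b.1
  rw [a.2, b.2] at this
  omega

lemma card_filter_ne_not_disjoint (r : {s : Finset (Fin m) // s.card = 2}) :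
    #{v | r ≠ v ∧ ¬ Disjoint r.1 v.1} = 2 * (m - 2) := by
  have hprod : #(r.1 ×ˢ r.1ᶜ) = 2 * (m - 2) := by simp [card_compl, r.2]
  rw [← hprod]
  symm
  refine card_bij (fun p hp => ⟨{p.1, p.2}, card_pair (ne_of_mem_of_not_mem (mem_product.mp hp).1
    (mem_compl.mp (mem_product.mp hp).2))⟩) ?_ ?_ ?_
  · rintro ⟨x, z⟩ hp
    simp only [mem_product, mem_compl] at hp
    simp only [mem_filter, mem_univ, true_and, ne_eq, Subtype.ext_iff, not_disjoint_iff]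
    exact ⟨fun h => hp.2 (h ▸ by simp), x, hp.1, by simp⟩
  · rintro ⟨x, z⟩ hp ⟨x', z'⟩ hp' heq
    simp only [mem_product, mem_compl] at hp hp'
    simp only [Subtype.mk.injEq, Finset.ext_iff, mem_insert, mem_singleton] at heq
    obtain rfl : x' = x := ((heq x').mpr (.inl rfl)).resolve_right fun h => hp.2 (h ▸ hp'.1)
    obtain rfl : z' = z := ((heq z').mpr (.inr rfl)).resolve_left fun h => hp'.2 (h ▸ hp.1)
    rfl
  · intro v hv
    simp only [mem_filter, mem_univ, true_and, not_disjoint_iff] at hv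
    obtain ⟨hvr, x, hxr, hxv⟩ := hv
    obtain ⟨z, hzv, hzr⟩ : ∃ z ∈ v.1, z ∉ r.1 := by
      by_contra! hsub
      exact hvr (Subtype.ext (eq_of_subset_of_card_le hsub (by rw [r.2, v.2])).symm)
    refine ⟨(x, z), mem_product.mpr ⟨hxr, mem_compl.mpr hzr⟩, Subtype.ext ?_⟩
    exact eq_of_subset_of_card_le (insert_subset hxv (singleton_subset_iff.mpr hzv))
      (by rw [v.2, card_pair (ne_of_mem_of_not_mem hxr hzr)])

lemma card_filter_kneserGraph_dist_eq_two (hm : 5 ≤ m) (r : {s : Finset (Fin m) // s.card = 2}) :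
    #{v | (kneserGraph m 2).dist r v = 2} = 2 * (m - 2) := by
  simp only [kneserGraph_dist_eq_two_iff two_ne_zero (by omega : 3 * 2 ≤ m + 1)]
  exact card_filter_ne_not_disjoint r

end Kneser

theorem kneser_Ct2_unsolvable (m t : ℕ) (hm : 5 ≤ m) (ht : 1 ≤ t)
    (r y : {s : Finset (Fin m) // s.card = 2})
    (hy : (kneserGraph m 2).dist r y = 2)
    (C : {s : Finset (Fin m) // s.card = 2} → ℕ)
    (hC : C = fun v => if v = y then 4 * t - 1
      else if (kneserGraph m 2).dist r v = 2 then 1 else 0) :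
    (∑ v, C v) = 4 * t + 2 * (m - 2) - 2 ∧
    ¬ Solvable (kneserGraph m 2) C (stack r t) := by
  obtain ⟨hry, hadj, -⟩ := SimpleGraph.dist_eq_two_iff.mp hy
  subst hC
  constructor
  · rw [sum_ite_eq_ite_boole (P := fun v => (kneserGraph m 2).dist r v = 2) hy,
      card_filter_kneserGraph_dist_eq_two hm r]
    omega
  · refine not_solvable_stack_of_le_one (Ne.symm hry) hadj ?_ ?_ ?_ ?_
    · simp [hry]
    · intro w hw
      have hwy : w ≠ y := by rintro rfl; exact hadj hw
      simp [hwy, SimpleGraph.dist_eq_one_iff_adj.mpr hw]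
    · intro w hw
      simp only [hw, if_false]
      split_ifs <;> omega
    · simp only [if_true]
      omega
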